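/- arXiv:2210.10422 — 2 statements merged into one kernel-verified Lean document; each statement's English description precedes it below -/
import Mathlib

section
/- Let P be a homothetic packing of n squares with radii r_1, …, r_n and centres p_1, …, p_n, and suppose that for some 1 ≤ s ≤ n − 1 the following hold: (1) Σ_{i=1}^s r_i = Σ_{i=s+1}^n r_i; (2) p_1 = (r_1, r_1) and p_{s+1} = (r_{s+1}, −r_{s+1}); (3) p_i = (r_i + Σ_{j=1}^{i−1} 2r_j, r_i) for all 2 ≤ i ≤ s, and p_i = (r_i + Σ_{j=s+1}^{i−1} 2r_j, −r_i) for all s + 2 ≤ i ≤ n. Then the graph ([n], E_y) of y-direction contacts is connected. -/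
open Finset Real

noncomputable section

/-- The standard square `[-1,1] × [-1,1]`. -/
def stdSquare : Set (ℝ × ℝ) := {q : ℝ × ℝ | -1 ≤ q.1 ∧ q.1 ≤ 1 ∧ -1 ≤ q.2 ∧ q.2 ≤ 1}

/-- The homothetic copy `r • S + p` of the standard square (radius `r`, centre `p`). -/
def homSq (r : ℝ) (p : ℝ × ℝ) : Set (ℝ × ℝ) := (fun q => r • q + p) '' stdSquare

/-- A homothetic packing of `n` squares with radii `r` and centres `p`:
all radii are positive and the interiors of the squares are pairwise disjoint. -/
def IsSqPacking {n : ℕ} (r : Fin n → ℝ) (p : Fin n → ℝ × ℝ) : Prop :=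
  (∀ i, 0 < r i) ∧
  ∀ i j, i ≠ j → interior (homSq (r i) (p i)) ∩ interior (homSq (r j) (p j)) = ∅

/-- Squares `i` and `j` are distinct and touch: an edge of the contact graph. -/
def SqContact {n : ℕ} (r : Fin n → ℝ) (p : Fin n → ℝ × ℝ) (i j : Fin n) : Prop :=
  i ≠ j ∧ (homSq (r i) (p i) ∩ homSq (r j) (p j)).Nonempty

/-- The contact graph of a homothetic square packing. -/
def contactGraph {n : ℕ} (r : Fin n → ℝ) (p : Fin n → ℝ × ℝ) : SimpleGraph (Fin n) where
  Adj i j := SqContact r p i j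
  symm := by
    constructor
    intro i j h
    refine ⟨h.1.symm, ?_⟩
    rw [Set.inter_comm]
    exact h.2
  loopless := ⟨fun i h => h.1 rfl⟩

/-- `{i,j}` is an x-direction contact: the squares touch and
`r i + r j = |x_i - x_j| ≥ |y_i - y_j|`. -/
def XContact {n : ℕ} (r : Fin n → ℝ) (p : Fin n → ℝ × ℝ) (i j : Fin n) : Prop :=
  SqContact r p i j ∧ r i + r j = |(p i).1 - (p j).1| ∧
    |(p i).2 - (p j).2| ≤ |(p i).1 - (p j).1|

/-- `{i,j}` is a y-direction contact: the squares touch and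
`r i + r j = |y_i - y_j| ≥ |x_i - x_j|`. -/
def YContact {n : ℕ} (r : Fin n → ℝ) (p : Fin n → ℝ × ℝ) (i j : Fin n) : Prop :=
  SqContact r p i j ∧ r i + r j = |(p i).2 - (p j).2| ∧
    |(p i).1 - (p j).1| ≤ |(p i).2 - (p j).2|

/-- The graph `([n], E_x)` of x-direction contacts. -/
def xGraph {n : ℕ} (r : Fin n → ℝ) (p : Fin n → ℝ × ℝ) : SimpleGraph (Fin n) where
  Adj i j := XContact r p i j
  symm := by
    constructor
    intro i j h
    refine ⟨(contactGraph r p).adj_symm h.1, ?_, ?_⟩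
    · rw [abs_sub_comm, add_comm]; exact h.2.1
    · rw [abs_sub_comm ((p j).2), abs_sub_comm ((p j).1)]; exact h.2.2
  loopless := ⟨fun i h => h.1.1 rfl⟩

/-- The graph `([n], E_y)` of y-direction contacts. -/
def yGraph {n : ℕ} (r : Fin n → ℝ) (p : Fin n → ℝ × ℝ) : SimpleGraph (Fin n) where
  Adj i j := YContact r p i j
  symm := by
    constructor
    intro i j h
    refine ⟨(contactGraph r p).adj_symm h.1, ?_, ?_⟩
    · rw [abs_sub_comm, add_comm]; exact h.2.1
    · rw [abs_sub_comm ((p j).2), abs_sub_comm ((p j).1)]; exact h.2.2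
  loopless := ⟨fun i h => h.1.1 rfl⟩

/-- Positive radii satisfy the weak generic condition if the only `σ : [n] → {-1,0,1}`
with at least 4 zeroes satisfying `Σ σ i * r i = 0` is the zero function. -/
def WeakGeneric {n : ℕ} (r : Fin n → ℝ) : Prop :=
  ∀ σ : Fin n → ℤ, (∀ i, σ i = -1 ∨ σ i = 0 ∨ σ i = 1) →
    4 ≤ (Finset.univ.filter fun i => σ i = 0).card →
    (∑ i, (σ i : ℝ) * r i) = 0 → σ = 0

/-- `z` is a corner of the axis-parallel square with radius `r` and centre `c`. -/
def IsSqCorner (r : ℝ) (c z : ℝ × ℝ) : Prop := |z.1 - c.1| = r ∧ |z.2 - c.2| = r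

/-- The four squares `i, j, k, l` share a corner: their common intersection is a single
point which is a corner of each of the four squares. -/
def ShareCorner {n : ℕ} (r : Fin n → ℝ) (p : Fin n → ℝ × ℝ) (i j k l : Fin n) : Prop :=
  ∃ z : ℝ × ℝ,
    homSq (r i) (p i) ∩ homSq (r j) (p j) ∩ homSq (r k) (p k) ∩ homSq (r l) (p l) = {z} ∧
    IsSqCorner (r i) (p i) z ∧ IsSqCorner (r j) (p j) z ∧
    IsSqCorner (r k) (p k) z ∧ IsSqCorner (r l) (p l) z

lemma mem_homSq {r : ℝ} (hr : 0 < r) {c z : ℝ × ℝ} :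
    z ∈ homSq r c ↔ c.1 - r ≤ z.1 ∧ z.1 ≤ c.1 + r ∧ c.2 - r ≤ z.2 ∧ z.2 ≤ c.2 + r := by
  constructor
  · rintro ⟨q, ⟨h1, h2, h3, h4⟩, rfl⟩
    simp only [Prod.fst_add, Prod.snd_add, Prod.smul_fst, Prod.smul_snd, smul_eq_mul]
    refine ⟨?_, ?_, ?_, ?_⟩ <;> nlinarith
  · rintro ⟨h1, h2, h3, h4⟩
    refine ⟨((z.1 - c.1) / r, (z.2 - c.2) / r), ⟨?_, ?_, ?_, ?_⟩, ?_⟩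
    · rw [le_div_iff₀ hr]; linarith
    · rw [div_le_iff₀ hr]; linarith
    · rw [le_div_iff₀ hr]; linarith
    · rw [div_le_iff₀ hr]; linarith
    · have : r ≠ 0 := ne_of_gt hr
      ext <;> simp only [Prod.fst_add, Prod.snd_add, Prod.smul_fst, Prod.smul_snd,
        smul_eq_mul] <;> field_simp <;> ring

/-- If square `i` sits on top of the x-axis, square `j` below, and a common abscissa `t`
lies in both x-projections, then `{i,j}` is a y-direction contact. -/
lemma yedge {n : ℕ} (r : Fin n → ℝ) (p : Fin n → ℝ × ℝ) (hr : ∀ i, 0 < r i)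
    {i j : Fin n} (hij : i ≠ j)
    (hpi2 : (p i).2 = r i) (hpj2 : (p j).2 = -(r j))
    {t : ℝ} (hi1 : (p i).1 - r i ≤ t) (hi2 : t ≤ (p i).1 + r i)
    (hj1 : (p j).1 - r j ≤ t) (hj2 : t ≤ (p j).1 + r j) :
    YContact r p i j := by
  have hri := hr i
  have hrj := hr j
  have hy : |(p i).2 - (p j).2| = r i + r j := by
    rw [hpi2, hpj2]
    rw [abs_of_pos (by linarith)]
    ring
  refine ⟨⟨hij, ⟨(t, 0), ?_, ?_⟩⟩, hy.symm, ?_⟩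
  · rw [mem_homSq hri]
    refine ⟨by simpa using hi1, by simpa using hi2, ?_, ?_⟩ <;>
      simp only [hpi2] <;> linarith
  · rw [mem_homSq hrj]
    refine ⟨by simpa using hj1, by simpa using hj2, ?_, ?_⟩ <;>
      simp only [hpj2] <;> linarith
  · rw [hy]
    rw [abs_le]
    constructor <;> linarith

/-- **Lemma 4.2.** Consider a homothetic square packing consisting of two rows of squares:
squares `0, …, s-1` placed left to right along the top of the x-axis and squares
`s, …, n-1` placed left to right along the bottom, both rows starting at `x = 0`, where
the total widths of the two rows agree. Then the graph `([n], E_y)` of y-direction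
contacts is connected. (Vertex `i : Fin n` corresponds to the paper's index `i + 1`.) -/
theorem two_rows_yGraph_connected (n : ℕ) (r : Fin n → ℝ) (p : Fin n → ℝ × ℝ)
    (hP : IsSqPacking r p) (s : ℕ) (hs1 : 1 ≤ s) (hsn : s ≤ n - 1)
    (hsum : ∑ i ∈ Finset.univ.filter (fun i : Fin n => (i : ℕ) < s), r i =
            ∑ i ∈ Finset.univ.filter (fun i : Fin n => s ≤ (i : ℕ)), r i)
    (htop : ∀ i : Fin n, (i : ℕ) < s →
      p i = (r i + ∑ j ∈ Finset.univ.filter (fun j : Fin n => (j : ℕ) < (i : ℕ)), 2 * r j,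
             r i))
    (hbot : ∀ i : Fin n, s ≤ (i : ℕ) →
      p i = (r i + ∑ j ∈ Finset.univ.filter
               (fun j : Fin n => s ≤ (j : ℕ) ∧ (j : ℕ) < (i : ℕ)), 2 * r j,
             -(r i))) :
    (yGraph r p).Connected := by
  obtain ⟨hr, -⟩ := hP
  have hn2 : 2 ≤ n := by omega
  have hsn' : s < n := by omega
  -- left-endpoint prefix-sum functions for the two rows
  set F : ℕ → ℝ := fun k => ∑ j ∈ Finset.univ.filter (fun j : Fin n => (j : ℕ) < k), 2 * r j
    with hF
  set G : ℕ → ℝ := fun k =>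
      ∑ j ∈ Finset.univ.filter (fun j : Fin n => s ≤ (j : ℕ) ∧ (j : ℕ) < k), 2 * r j with hG
  have hF0 : F 0 = 0 := by simp [hF]
  have hGs : G s = 0 := by
    rw [hG]
    have h0 : (Finset.univ.filter (fun j : Fin n => s ≤ (j : ℕ) ∧ (j : ℕ) < s)) = ∅ := by
      ext j
      simp only [Finset.mem_filter, Finset.mem_univ, true_and, Finset.notMem_empty, iff_false]
      omega
    simp [h0]
  have hFstep : ∀ k (hk : k < n), F (k + 1) = F k + 2 * r ⟨k, hk⟩ := by
    intro k hk
    have hins : (Finset.univ.filter (fun j : Fin n => (j : ℕ) < k + 1)) =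
        insert ⟨k, hk⟩ (Finset.univ.filter (fun j : Fin n => (j : ℕ) < k)) := by
      ext j
      simp [Fin.ext_iff]
      omega
    rw [hF]
    simp only
    rw [hins, Finset.sum_insert (by simp)]
    ring
  have hGstep : ∀ k (hk : k < n), s ≤ k → G (k + 1) = G k + 2 * r ⟨k, hk⟩ := by
    intro k hk hsk
    have hins : (Finset.univ.filter (fun j : Fin n => s ≤ (j : ℕ) ∧ (j : ℕ) < k + 1)) =
        insert ⟨k, hk⟩ (Finset.univ.filter (fun j : Fin n => s ≤ (j : ℕ) ∧ (j : ℕ) < k)) := by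
      ext j
      simp [Fin.ext_iff]
      omega
    rw [hG]
    simp only
    rw [hins, Finset.sum_insert (by simp)]
    ring
  have hFmono : ∀ {a b : ℕ}, a ≤ b → F a ≤ F b := by
    intro a b hab
    apply Finset.sum_le_sum_of_subset_of_nonneg
    · intro j hj
      simp only [Finset.mem_filter, Finset.mem_univ, true_and] at *
      omega
    · intro j _ _
      have := hr j
      linarith
  have hGmono : ∀ {a b : ℕ}, a ≤ b → G a ≤ G b := by
    intro a b hab
    apply Finset.sum_le_sum_of_subset_of_nonneg
    · intro j hj
      simp only [Finset.mem_filter, Finset.mem_univ, true_and] at *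
      omega
    · intro j _ _
      have := hr j
      linarith
  -- the two rows have the same total width
  have hT : F s = G n := by
    have h1 : (Finset.univ.filter (fun j : Fin n => s ≤ (j : ℕ) ∧ (j : ℕ) < n)) =
        (Finset.univ.filter (fun j : Fin n => s ≤ (j : ℕ))) := by
      ext j; simp [j.isLt]
    rw [hF, hG]
    simp only [h1]
    rw [← Finset.mul_sum, ← Finset.mul_sum, hsum]
  -- centres in terms of F, G
  have hptop : ∀ i : Fin n, (i : ℕ) < s → p i = (r i + F (i : ℕ), r i) := fun i hi => htop i hi
  have hpbot : ∀ i : Fin n, s ≤ (i : ℕ) → p i = (r i + G (i : ℕ), -(r i)) := fun i hi => hbot i hi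
  -- covering lemmas: any 0 < t ≤ total width lies in some interval of each row
  have hcovF : ∀ m : ℕ, m ≤ s → ∀ t : ℝ, 0 < t → t ≤ F m →
      ∃ i : Fin n, (i : ℕ) < m ∧ F (i : ℕ) < t ∧ t ≤ F ((i : ℕ) + 1) := by
    intro m
    induction m with
    | zero => intro _ t ht ht'; rw [hF0] at ht'; linarith
    | succ m ih =>
      intro hm t ht ht'
      by_cases h : t ≤ F m
      · obtain ⟨i, h1, h2, h3⟩ := ih (by omega) t ht h
        exact ⟨i, by omega, h2, h3⟩
      · exact ⟨⟨m, by omega⟩, by simp, by push_neg at h; simpa using h, by simpa using ht'⟩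
  have hcovG : ∀ m : ℕ, m ≤ n → ∀ t : ℝ, 0 < t → t ≤ G m →
      ∃ i : Fin n, s ≤ (i : ℕ) ∧ (i : ℕ) < m ∧ G (i : ℕ) < t ∧ t ≤ G ((i : ℕ) + 1) := by
    intro m
    induction m with
    | zero =>
      intro _ t ht ht'
      have h0 : G 0 ≤ G s := hGmono (Nat.zero_le s)
      rw [hGs] at h0
      linarith
    | succ m ih =>
      intro hm t ht ht'
      rcases le_or_gt s m with hsm | hsm
      · by_cases h : t ≤ G m
        · obtain ⟨i, h1, h2, h3, h4⟩ := ih (by omega) t ht h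
          exact ⟨i, h1, by omega, h3, h4⟩
        · exact ⟨⟨m, by omega⟩, by simpa using hsm, by simp,
            by push_neg at h; simpa using h, by simpa using ht'⟩
      · have : m + 1 ≤ s := hsm
        have := hGmono (show m + 1 ≤ s from this)
        rw [hGs] at this
        linarith
  -- the left endpoint of each square
  set L : Fin n → ℝ := fun i => (p i).1 - r i with hL
  have hLtop : ∀ i : Fin n, (i : ℕ) < s → L i = F (i : ℕ) := by
    intro i hi; rw [hL]; simp [hptop i hi]
  have hLbot : ∀ i : Fin n, s ≤ (i : ℕ) → L i = G (i : ℕ) := by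
    intro i hi; rw [hL]; simp [hpbot i hi]
  -- measure for strong induction
  set m : Fin n → ℕ := fun i => (Finset.univ.filter (fun k : Fin n => L k < L i)).card with hm
  have hmdec : ∀ {a b : Fin n}, L a < L b → m a < m b := by
    intro a b h
    apply Finset.card_lt_card
    have hsub : (Finset.univ.filter (fun k : Fin n => L k < L a)) ⊆
        (Finset.univ.filter (fun k : Fin n => L k < L b)) := by
      intro k hk
      simp only [Finset.mem_filter, Finset.mem_univ, true_and] at *
      linarith
    rw [Finset.ssubset_iff_of_subset hsub]
    exact ⟨a, by simp [h], by simp⟩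
  set v0 : Fin n := ⟨0, by omega⟩ with hv0
  set vs : Fin n := ⟨s, hsn'⟩ with hvs
  have hrpos : ∀ i, 0 < r i := hr
  -- main claim: every vertex reaches v0
  have main : ∀ N : ℕ, ∀ i : Fin n, m i = N → (yGraph r p).Reachable i v0 := by
    intro N
    induction N using Nat.strong_induction_on with
    | _ N IH =>
      intro i hi
      rcases lt_or_ge (i : ℕ) s with hitop | hibot
      · -- top row
        rcases Nat.eq_zero_or_pos (i : ℕ) with h0 | h0
        · have : i = v0 := Fin.ext (by simp [hv0, h0])
          rw [this]
        · -- L i > 0, find a bottom neighbour with smaller left endpoint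
          have hLi : L i = F (i : ℕ) := hLtop i hitop
          have hpos : 0 < L i := by
            rw [hLi]
            calc (0 : ℝ) < 2 * r v0 := by have := hr v0; linarith
              _ = F 0 + 2 * r v0 := by rw [hF0]; ring
              _ = F 1 := (hFstep 0 (by omega)).symm
              _ ≤ F (i : ℕ) := hFmono (by omega)
          have hle : L i ≤ G n := by
            rw [hLi, ← hT]; exact hFmono (by omega)
          obtain ⟨j, hj1, hj2, hj3, hj4⟩ := hcovG n le_rfl (L i) hpos hle
          have hjstep : G ((j : ℕ) + 1) = G (j : ℕ) + 2 * r j := by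
            have := hGstep (j : ℕ) j.isLt hj1
            simpa using this
          have hLj : L j = G (j : ℕ) := hLbot j hj1
          have hne : i ≠ j := by
            intro h; rw [h] at hitop; omega
          have hadj : YContact r p i j := by
            apply yedge r p hrpos hne (t := L i)
            · rw [hptop i hitop]
            · rw [hpbot j hj1]
            · have : (p i).1 - r i = L i := rfl
              rw [this]
            · have : (p i).1 + r i = L i + 2 * r i := by rw [hL]; ring_nf
              rw [this]
              have := hrpos i
              linarith
            · have : (p j).1 - r j = L j := rfl
              rw [this, hLj]
              exact le_of_lt hj3
            · have : (p j).1 + r j = L j + 2 * r j := by rw [hL]; ring_nf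
              rw [this, hLj, ← hjstep]
              exact hj4
          have hmj : m j < N := by
            rw [← hi]
            exact hmdec (by rw [hLj, hLi] at *; linarith [hLi ▸ hj3])
          have hreach := IH (m j) hmj j rfl
          exact (SimpleGraph.Adj.reachable (show (yGraph r p).Adj i j from hadj)).trans hreach
      · -- bottom row
        rcases eq_or_lt_of_le hibot with h0 | h0
        · -- i = vs : adjacent to v0 via t = 0
          have hieq : i = vs := Fin.ext (by simp [hvs, ← h0])
          have hne : v0 ≠ i := by
            intro h; rw [← h] at hibot; simp [hv0] at hibot; omega
          have hL0 : L v0 = F 0 := hLtop v0 (by simp [hv0]; omega)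
          have hLi : L i = G s := by rw [hieq]; exact hLbot vs (by simp [hvs])
          have hadj : YContact r p v0 i := by
            apply yedge r p hrpos hne (t := 0)
            · rw [hptop v0 (by simp [hv0]; omega)]
            · rw [hpbot i hibot]
            · have : (p v0).1 - r v0 = L v0 := rfl
              rw [this, hL0, hF0]
            · have h1 : (p v0).1 + r v0 = L v0 + 2 * r v0 := by rw [hL]; ring_nf
              rw [h1, hL0, hF0]
              have := hrpos v0
              linarith
            · have : (p i).1 - r i = L i := rfl
              rw [this, hLi, hGs]
            · have h1 : (p i).1 + r i = L i + 2 * r i := by rw [hL]; ring_nf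
              rw [h1, hLi, hGs]
              have := hrpos i
              linarith
          exact ((yGraph r p).adj_symm hadj).reachable
        · -- s < i : L i > 0, find a top neighbour with smaller left endpoint
          have hLi : L i = G (i : ℕ) := hLbot i hibot
          have hpos : 0 < L i := by
            rw [hLi]
            calc (0 : ℝ) < 2 * r vs := by have := hr vs; linarith
              _ = G s + 2 * r vs := by rw [hGs]; ring
              _ = G (s + 1) := (hGstep s hsn' le_rfl).symm
              _ ≤ G (i : ℕ) := hGmono (by omega)
          have hle : L i ≤ F s := by
            rw [hLi, hT]; exact hGmono (le_of_lt i.isLt)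
          obtain ⟨j, hj2, hj3, hj4⟩ := hcovF s le_rfl (L i) hpos hle
          have hjstep : F ((j : ℕ) + 1) = F (j : ℕ) + 2 * r j := by
            have := hFstep (j : ℕ) j.isLt
            simpa using this
          have hLj : L j = F (j : ℕ) := hLtop j hj2
          have hne : j ≠ i := by
            intro h; rw [h] at hj2; omega
          have hadj : YContact r p j i := by
            apply yedge r p hrpos hne (t := L i)
            · rw [hptop j hj2]
            · rw [hpbot i hibot]
            · have : (p j).1 - r j = L j := rfl
              rw [this, hLj]
              exact le_of_lt hj3
            · have : (p j).1 + r j = L j + 2 * r j := by rw [hL]; ring_nf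
              rw [this, hLj, ← hjstep]
              exact hj4
            · have : (p i).1 - r i = L i := rfl
              rw [this]
            · have : (p i).1 + r i = L i + 2 * r i := by rw [hL]; ring_nf
              rw [this]
              have := hrpos i
              linarith
          have hmj : m j < N := by
            rw [← hi]
            exact hmdec (by rw [hLj]; linarith)
          have hreach := IH (m j) hmj j rfl
          exact (SimpleGraph.Adj.reachable
            (show (yGraph r p).Adj i j from (yGraph r p).adj_symm hadj)).trans hreach
  rw [SimpleGraph.connected_iff]
  refine ⟨fun u v => ?_, ⟨v0⟩⟩
  exact (main (m u) u rfl).trans (main (m v) v rfl).symm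
end
end

section
/- Let n ≥ 7 and let r_1, …, r_n be any positive real numbers. Then there exists a homothetic packing of n cubes with radii r_1, …, r_n whose contact graph has more than 3n − 3 edges. -/
open Finset Real

noncomputable section

/-- The standard cube `[-1,1]³`. -/
def stdCube : Set (Fin 3 → ℝ) := {q : Fin 3 → ℝ | ∀ t, -1 ≤ q t ∧ q t ≤ 1}

/-- The homothetic copy `r • C + p` of the standard cube (radius `r`, centre `p`). -/
def homCube (r : ℝ) (p : Fin 3 → ℝ) : Set (Fin 3 → ℝ) := (fun q => r • q + p) '' stdCube

/-- A homothetic packing of `n` cubes with radii `r` and centres `p`: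
all radii are positive and the interiors of the cubes are pairwise disjoint. -/
def IsCubePacking {n : ℕ} (r : Fin n → ℝ) (p : Fin n → Fin 3 → ℝ) : Prop :=
  (∀ i, 0 < r i) ∧
  ∀ i j, i ≠ j → interior (homCube (r i) (p i)) ∩ interior (homCube (r j) (p j)) = ∅

/-- The contact graph of a homothetic cube packing. -/
def cubeContactGraph {n : ℕ} (r : Fin n → ℝ) (p : Fin n → Fin 3 → ℝ) :
    SimpleGraph (Fin n) where
  Adj i j := i ≠ j ∧ (homCube (r i) (p i) ∩ homCube (r j) (p j)).Nonempty
  symm := ⟨by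
    intro i j h
    refine ⟨h.1.symm, ?_⟩
    rw [Set.inter_comm]
    exact h.2⟩
  loopless := ⟨fun i h => h.1 rfl⟩

/-- The graph of face-to-face contacts of a homothetic cube packing: distinct cubes whose
intersection is a convex set of affine dimension 2. -/
def cubeFFGraph {n : ℕ} (r : Fin n → ℝ) (p : Fin n → Fin 3 → ℝ) :
    SimpleGraph (Fin n) where
  Adj i j := i ≠ j ∧ Convex ℝ (homCube (r i) (p i) ∩ homCube (r j) (p j)) ∧
    Module.finrank ℝ (vectorSpan ℝ (homCube (r i) (p i) ∩ homCube (r j) (p j))) = 2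
  symm := ⟨by
    rintro i j ⟨hne, hconv, hrank⟩
    rw [Set.inter_comm] at hconv hrank
    exact ⟨hne.symm, hconv, hrank⟩⟩
  loopless := ⟨fun i h => h.1 rfl⟩

lemma homCube_eq {r : ℝ} (hr : 0 < r) (p : Fin 3 → ℝ) :
    homCube r p = Set.pi Set.univ (fun t => Set.Icc (p t - r) (p t + r)) := by
  ext q
  simp only [homCube, Set.mem_image, stdCube, Set.mem_setOf_eq, Set.mem_pi, Set.mem_univ,
    true_implies, Set.mem_Icc]
  constructor
  · rintro ⟨x, hx, rfl⟩ t
    have h1 := (hx t).1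
    have h2 := (hx t).2
    simp only [Pi.add_apply, Pi.smul_apply, smul_eq_mul]
    constructor <;> nlinarith
  · intro h
    refine ⟨fun t => (q t - p t) / r, fun t => ?_, ?_⟩
    · rw [le_div_iff₀ hr, div_le_one hr]
      constructor <;> linarith [(h t).1, (h t).2]
    · funext t
      simp only [Pi.add_apply, Pi.smul_apply, smul_eq_mul]
      field_simp
      ring

lemma interior_homCube {r : ℝ} (hr : 0 < r) (p : Fin 3 → ℝ) :
    interior (homCube r p) = Set.pi Set.univ (fun t => Set.Ioo (p t - r) (p t + r)) := by
  rw [homCube_eq hr p, interior_pi_set Set.finite_univ]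
  simp [interior_Icc]

def S8 (n : ℕ) : ℕ := ∑ j ∈ Finset.range n, j % 8

lemma S8_add_eight (n : ℕ) : S8 (n + 8) = S8 n + 28 := by
  induction n with
  | zero => decide
  | succ n ih =>
    have h : n + 1 + 8 = (n + 8) + 1 := by ring
    rw [h, S8, Finset.sum_range_succ, ← S8, ih,
      show S8 (n+1) = S8 n + n % 8 from by rw [S8, Finset.sum_range_succ, ← S8]]
    omega

lemma S8_ge (n : ℕ) (h : 7 ≤ n) : 3 * n - 2 ≤ S8 n := by
  induction n using Nat.strong_induction_on with
  | _ n ih =>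
    rcases le_or_gt n 14 with h14 | h14
    · interval_cases n <;> decide
    · obtain ⟨m, rfl⟩ : ∃ m, n = m + 8 := ⟨n - 8, by omega⟩
      have := ih m (by omega) (by omega)
      rw [S8_add_eight]; omega

lemma fiber_card (n : ℕ) (j : Fin n) :
    (Finset.univ.filter fun i : Fin n => i.val < j.val ∧ i.val / 8 = j.val / 8).card
      = j.val % 8 := by
  have key : (Finset.univ.filter fun i : Fin n => i.val < j.val ∧ i.val / 8 = j.val / 8).card
      = (Finset.Ico (j.val - j.val % 8) j.val).card := by
    apply Finset.card_bij (fun i _ => i.val)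
    · intro i hi
      simp only [Finset.mem_filter, Finset.mem_univ, true_and] at hi
      simp only [Finset.mem_Ico]
      omega
    · intro a _ b _ h; exact Fin.val_injective h
    · intro b hb
      simp only [Finset.mem_Ico] at hb
      refine ⟨⟨b, lt_trans hb.2 j.isLt⟩, ?_, rfl⟩
      simp only [Finset.mem_filter, Finset.mem_univ, true_and]
      omega
  rw [key, Nat.card_Ico]; omega

lemma pairs_card (n : ℕ) :
    ((Finset.univ : Finset (Fin n × Fin n)).filter
      (fun a => a.1.val < a.2.val ∧ a.1.val / 8 = a.2.val / 8)).card = S8 n := by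
  rw [Finset.card_eq_sum_card_fiberwise (f := Prod.snd) (t := Finset.univ)
    (fun x _ => Finset.mem_univ _)]
  have : ∀ j : Fin n, ((Finset.univ : Finset (Fin n × Fin n)).filter
      (fun a => a.1.val < a.2.val ∧ a.1.val / 8 = a.2.val / 8)
        |>.filter fun x => x.2 = j).card
      = (Finset.univ.filter fun i : Fin n => i.val < j.val ∧ i.val / 8 = j.val / 8).card := by
    intro j
    apply Finset.card_bij (fun a _ => a.1)
    · intro a ha
      simp only [Finset.mem_filter, Finset.mem_univ, true_and] at ha ⊢
      rcases ha with ⟨⟨h1, h2⟩, rfl⟩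
      exact ⟨h1, h2⟩
    · intro a ha b hb h
      simp only [Finset.mem_filter] at ha hb
      exact Prod.ext h (ha.2.trans hb.2.symm)
    · intro i hi
      simp only [Finset.mem_filter, Finset.mem_univ, true_and] at hi
      refine ⟨(i, j), ?_, rfl⟩
      simp only [Finset.mem_filter, Finset.mem_univ, true_and]
      exact ⟨hi, trivial⟩
  simp_rw [this, fiber_card]
  rw [S8, ← Fin.sum_univ_eq_sum_range]

def oct (o : ℕ) (t : Fin 3) : ℝ := if o / 2 ^ t.val % 2 = 0 then 1 else -1

lemma oct_pm (o : ℕ) (t : Fin 3) : oct o t = 1 ∨ oct o t = -1 := by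
  unfold oct; split <;> simp

lemma oct_ne {a b : ℕ} (ha : a < 8) (hb : b < 8) (hab : a ≠ b) :
    ∃ t : Fin 3, oct a t = 1 ∧ oct b t = -1 ∨ oct a t = -1 ∧ oct b t = 1 := by
  have key : ∃ t : Fin 3, ¬ (a / 2 ^ t.val % 2 = 0 ↔ b / 2 ^ t.val % 2 = 0) := by
    by_contra hc
    push_neg at hc
    have h0 := hc ⟨0, by norm_num⟩
    have h1 := hc ⟨1, by norm_num⟩
    have h2 := hc ⟨2, by norm_num⟩
    simp only [pow_zero, pow_one] at h0 h1 h2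
    have h4 : (2:ℕ)^2 = 4 := by norm_num
    rw [h4] at h2
    omega
  obtain ⟨t, ht⟩ := key
  refine ⟨t, ?_⟩
  unfold oct
  rcases Nat.eq_zero_or_pos (a / 2 ^ t.val % 2) with h | h <;>
    rcases Nat.eq_zero_or_pos (b / 2 ^ t.val % 2) with h' | h' <;>
      simp [h, h', Nat.pos_iff_ne_zero.mp, *] at ht ⊢

/-- **Proposition 6.1.** For any `n ≥ 7` positive radii there exists a homothetic packing
of `n` cubes with these radii and more than `3n - 3` contacts. -/
theorem cube_packing_many_contacts (n : ℕ) (hn : 7 ≤ n) (r : Fin n → ℝ)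
    (hr : ∀ i, 0 < r i) :
    ∃ p : Fin n → Fin 3 → ℝ, IsCubePacking r p ∧
      3 * n - 3 < (cubeContactGraph r p).edgeSet.ncard := by
  have hn0 : 0 < n := by omega
  have hune : (Finset.univ : Finset (Fin n)).Nonempty := ⟨⟨0, hn0⟩, Finset.mem_univ _⟩
  set M : ℝ := Finset.univ.sup' hune r + 1 with hMdef
  have hM : ∀ i, r i < M := fun i =>
    lt_of_le_of_lt (Finset.le_sup' r (Finset.mem_univ i)) (by rw [hMdef]; linarith)
  have hM0 : 0 < M := lt_trans (hr ⟨0, hn0⟩) (hM ⟨0, hn0⟩)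
  set T : Fin n → ℝ := fun i => (i.val / 8 : ℕ) * (8 * M) with hTdef
  set p : Fin n → Fin 3 → ℝ := fun i t => T i + r i * oct (i.val % 8) t with hpdef
  -- the centre point of each group lies in every cube of the group
  have hcenter : ∀ i : Fin n, (fun _ : Fin 3 => T i) ∈ homCube (r i) (p i) := by
    intro i
    rw [homCube_eq (hr i)]
    intro t _
    simp only [Set.mem_Icc, hpdef]
    rcases oct_pm (i.val % 8) t with h | h <;> rw [h] <;>
      constructor <;> nlinarith [hr i]
  -- separation of distinct groups
  have hsep : ∀ a b : Fin n, a.val / 8 < b.val / 8 → ∀ q : Fin 3 → ℝ,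
      q ∈ Set.pi Set.univ (fun t => Set.Ioo (p a t - r a) (p a t + r a)) →
      q ∈ Set.pi Set.univ (fun t => Set.Ioo (p b t - r b) (p b t + r b)) → False := by
    intro a b hab q hqa hqb
    have h1 := (hqa 0 trivial).2
    have h2 := (hqb 0 trivial).1
    simp only [hpdef, Set.mem_Ioo] at h1 h2
    have hcast : ((a.val / 8 : ℕ) : ℝ) + 1 ≤ ((b.val / 8 : ℕ) : ℝ) := by
      exact_mod_cast Nat.succ_le_of_lt hab
    have hT : T a + 8 * M ≤ T b := by
      rw [hTdef]
      nlinarith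
    rcases oct_pm (a.val % 8) 0 with ha | ha <;> rcases oct_pm (b.val % 8) 0 with hb | hb <;>
      rw [ha] at h1 <;> rw [hb] at h2 <;>
        nlinarith [hr a, hr b, hM a, hM b]
  refine ⟨p, ⟨hr, ?_⟩, ?_⟩
  · -- packing
    intro i j hij
    rw [interior_homCube (hr i), interior_homCube (hr j)]
    rw [Set.eq_empty_iff_forall_notMem]
    rintro q ⟨hqi, hqj⟩
    rcases lt_trichotomy (i.val / 8) (j.val / 8) with h | h | h
    · exact hsep i j h q hqi hqj
    · -- same group: different octants
      have hne : i.val % 8 ≠ j.val % 8 := by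
        have : i.val ≠ j.val := fun hv => hij (Fin.ext hv)
        omega
      obtain ⟨t, ht⟩ := oct_ne (Nat.mod_lt _ (by norm_num)) (Nat.mod_lt _ (by norm_num)) hne
      have h1 := hqi t trivial
      have h2 := hqj t trivial
      simp only [hpdef, Set.mem_Ioo] at h1 h2
      have hTeq : T i = T j := by rw [hTdef]; norm_num [h]
      rcases ht with ⟨ha, hb⟩ | ⟨ha, hb⟩ <;> rw [ha] at h1 <;> rw [hb] at h2 <;>
        nlinarith [hr i, hr j, h1.1, h1.2, h2.1, h2.2]
    · exact hsep j i h q hqj hqi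
  · -- edge count
    set P : Finset (Fin n × Fin n) := (Finset.univ : Finset (Fin n × Fin n)).filter
      (fun a => a.1.val < a.2.val ∧ a.1.val / 8 = a.2.val / 8) with hPdef
    set E0 : Finset (Sym2 (Fin n)) := P.image (fun a => s(a.1, a.2)) with hE0def
    have hsub : (E0 : Set (Sym2 (Fin n))) ⊆ (cubeContactGraph r p).edgeSet := by
      intro x hx
      simp only [hE0def, Finset.coe_image, Set.mem_image, Finset.mem_coe, hPdef,
        Finset.mem_filter, Finset.mem_univ, true_and] at hx
      obtain ⟨a, ⟨hlt, hgr⟩, rfl⟩ := hx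
      rw [SimpleGraph.mem_edgeSet]
      show a.1 ≠ a.2 ∧ (homCube (r a.1) (p a.1) ∩ homCube (r a.2) (p a.2)).Nonempty
      refine ⟨fun h => absurd (congrArg Fin.val h) (Nat.ne_of_lt hlt), ?_⟩
      refine ⟨fun _ => T a.1, hcenter a.1, ?_⟩
      have hTeq : T a.1 = T a.2 := by rw [hTdef]; norm_num [hgr]
      rw [hTeq]
      exact hcenter a.2
    have hinj : Set.InjOn (fun a : Fin n × Fin n => s(a.1, a.2)) P := by
      intro a ha b hb hab
      simp only [Finset.mem_coe, hPdef, Finset.mem_filter, Finset.mem_univ, true_and] at ha hb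
      rw [Sym2.eq_iff] at hab
      rcases hab with ⟨h1, h2⟩ | ⟨h1, h2⟩
      · exact Prod.ext h1 h2
      · exfalso
        have := ha.1
        have := hb.1
        rw [← h1, ← h2] at this
        omega
    have hcard : E0.card = S8 n := by
      rw [hE0def, Finset.card_image_of_injOn hinj, hPdef, pairs_card]
    calc 3 * n - 3 < S8 n := by have := S8_ge n hn; omega
      _ = (E0 : Set (Sym2 (Fin n))).ncard := by rw [Set.ncard_coe_finset, hcard]
      _ ≤ (cubeContactGraph r p).edgeSet.ncard := Set.ncard_le_ncard hsub (Set.toFinite _)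
end
end
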